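/- arXiv:2604.23020 — 3 statements merged into one kernel-verified Lean document; each statement's English description precedes it below -/
import Mathlib

section
/- Let η^t = ∑_{n∈ℤ^d, n≠0} (2πt)^{−d/2} exp(−|Ln|²/(2t)). Then there is a constant C_d depending only on d such that 0 ≤ η^t ≤ C_d / L^d, uniformly in t > 0. -/
open Real

/-- The lattice point `L·k ∈ ℝ^d` associated to `k ∈ ℤ^d`. -/
noncomputable def latVec (d : ℕ) (L : ℝ) (k : Fin d → ℤ) : EuclideanSpace ℝ (Fin d) :=
  WithLp.toLp 2 (fun i => L * (k i : ℝ))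

/-- `η^t = ∑_{n∈ℤ^d, n≠0} (2πt)^{−d/2} exp(−|Ln|²/(2t))`, the periodic heat kernel
at `0` minus the Euclidean heat kernel at `0`. -/
noncomputable def etaKer (d : ℕ) (L t : ℝ) : ℝ :=
  ∑' n : {n : Fin d → ℤ // n ≠ 0},
    (2 * π * t) ^ (-(d : ℝ) / 2) * Real.exp (-‖latVec d L (n : Fin d → ℤ)‖ ^ 2 / (2 * t))

/-!
Put `c = L² / (2t)`. For `n ≠ 0` we have `|n|² ≥ 1`, so half of the Gaussian weight bounds the
term by `e^{-c/2}`, and the other half `e^{-(c/2)|n|²}`, summed over all of `ℤ^d`, factorizes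
into `d` one-dimensional theta sums, each at most `1 + √(2π/c)` by the integral test. In terms
of `a = L / √(2πt)` this gives `η^t ≤ e^{-πa²/2} (a + √2)^d / L^d`, and
`e^{-πa²/2} (a + √2)^d ≤ d! e²` because `x^d ≤ d! e^x`.
-/

section Gaussian

variable {c : ℝ}

lemma antitoneOn_exp_neg_mul_sq (hc : 0 < c) :
    AntitoneOn (fun x : ℝ => exp (-c * x ^ 2)) (Set.Ici 0) := by
  intro x hx y _ hxy
  have hsq : x ^ 2 ≤ y ^ 2 := pow_le_pow_left₀ hx hxy 2
  exact exp_le_exp.mpr (by nlinarith)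

lemma summable_exp_neg_mul_int_sq (hc : 0 < c) :
    Summable fun k : ℤ => exp (-c * (k : ℝ) ^ 2) := by
  have hnat : Summable fun n : ℕ => exp (-c * (n : ℝ) ^ 2) :=
    (antitoneOn_exp_neg_mul_sq hc).summable_of_integrableOn_Ioi_zero
      (integrable_exp_neg_mul_sq hc).integrableOn fun _ _ => (exp_pos _).le
  exact summable_int_iff_summable_nat_and_neg.mpr ⟨by simpa using hnat, by simpa using hnat⟩

lemma tsum_exp_neg_mul_int_sq_le (hc : 0 < c) :
    ∑' k : ℤ, exp (-c * (k : ℝ) ^ 2) ≤ 1 + √(π / c) := by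
  have htail : ∑' n : ℕ, exp (-c * ((n + 1 : ℕ) : ℝ) ^ 2) ≤ √(π / c) / 2 :=
    integral_gaussian_Ioi c ▸ (antitoneOn_exp_neg_mul_sq hc).tsum_add_one_le_integral
      (integrable_exp_neg_mul_sq hc).integrableOn fun _ _ => (exp_pos _).le
  rw [tsum_int_eq_zero_add_two_mul_tsum_pnat (fun k => by simp)
    (summable_exp_neg_mul_int_sq hc)]
  simp only [Int.cast_natCast]
  rw [tsum_pnat_eq_tsum_succ (f := fun n : ℕ => exp (-c * (n : ℝ) ^ 2))]
  simp only [Int.cast_zero, ne_eq, OfNat.ofNat_ne_zero, not_false_eq_true, zero_pow, mul_zero,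
    exp_zero, nsmul_eq_mul, Nat.cast_ofNat]
  linarith

end Gaussian

lemma sum_prod_le_pow_tsum {ι α : Type*} [Fintype ι] {f : α → ℝ} (hf0 : ∀ a, 0 ≤ f a)
    (hf : Summable f) (s : Finset (ι → α)) :
    ∑ n ∈ s, ∏ i, f (n i) ≤ (∑' a, f a) ^ Fintype.card ι := by
  classical
  set T : Finset α := s.biUnion fun n => Finset.univ.image n
  have hsub : s ⊆ Fintype.piFinset fun _ => T := fun n hn =>
    Fintype.mem_piFinset.mpr fun i =>
      Finset.mem_biUnion.mpr ⟨n, hn, Finset.mem_image_of_mem n (Finset.mem_univ i)⟩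
  calc ∑ n ∈ s, ∏ i, f (n i)
      ≤ ∑ n ∈ Fintype.piFinset fun _ => T, ∏ i, f (n i) :=
        Finset.sum_le_sum_of_subset_of_nonneg hsub fun n _ _ =>
          Finset.prod_nonneg fun i _ => hf0 (n i)
    _ = (∑ a ∈ T, f a) ^ Fintype.card ι := by
        rw [← Finset.prod_univ_sum, Finset.prod_const, Finset.card_univ]
    _ ≤ (∑' a, f a) ^ Fintype.card ι := by
        gcongr
        · exact Finset.sum_nonneg fun a _ => hf0 a
        · exact hf.sum_le_tsum T fun a _ => hf0 a

lemma one_le_sum_sq_of_ne_zero {ι : Type*} [Fintype ι] {k : ι → ℤ} (hk : k ≠ 0) :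
    1 ≤ ∑ i, (k i : ℝ) ^ 2 := by
  obtain ⟨j, hj⟩ := Function.ne_iff.mp hk
  have hj1 : (1 : ℤ) ≤ k j ^ 2 := by
    have := sq_pos_of_ne_zero hj
    omega
  calc (1 : ℝ) ≤ (k j : ℝ) ^ 2 := mod_cast hj1
    _ ≤ ∑ i, (k i : ℝ) ^ 2 :=
        Finset.single_le_sum (f := fun i => (k i : ℝ) ^ 2) (fun i _ => sq_nonneg _)
          (Finset.mem_univ j)

lemma exp_neg_mul_sum_sq_le_prod {ι : Type*} [Fintype ι] {c : ℝ} (hc : 0 ≤ c) {k : ι → ℤ}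
    (hk : k ≠ 0) :
    exp (-c * ∑ i, (k i : ℝ) ^ 2) ≤
      exp (-c / 2) * ∏ i, exp (-(c / 2) * (k i : ℝ) ^ 2) := by
  have hS := one_le_sum_sq_of_ne_zero hk
  rw [← exp_sum, ← exp_add, ← Finset.mul_sum]
  exact exp_le_exp.mpr (by nlinarith)

lemma sum_exp_neg_mul_sum_sq_le {d : ℕ} {c : ℝ} (hc : 0 < c)
    (s : Finset {n : Fin d → ℤ // n ≠ 0}) :
    ∑ n ∈ s, exp (-c * ∑ i, ((n : Fin d → ℤ) i : ℝ) ^ 2) ≤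
      exp (-c / 2) * (1 + √(2 * π / c)) ^ d := by
  have hc2 : 0 < c / 2 := half_pos hc
  calc ∑ n ∈ s, exp (-c * ∑ i, ((n : Fin d → ℤ) i : ℝ) ^ 2)
      ≤ ∑ n ∈ s, exp (-c / 2) * ∏ i, exp (-(c / 2) * ((n : Fin d → ℤ) i : ℝ) ^ 2) :=
        Finset.sum_le_sum fun n _ => exp_neg_mul_sum_sq_le_prod hc.le n.2
    _ = exp (-c / 2) * ∑ m ∈ s.map (Function.Embedding.subtype _),
          ∏ i, exp (-(c / 2) * (m i : ℝ) ^ 2) := by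
        rw [Finset.mul_sum, Finset.sum_map]
        rfl
    _ ≤ exp (-c / 2) * (∑' k : ℤ, exp (-(c / 2) * (k : ℝ) ^ 2)) ^ d := by
        gcongr
        simpa using sum_prod_le_pow_tsum (fun k => (exp_pos _).le)
          (summable_exp_neg_mul_int_sq hc2) (s.map (Function.Embedding.subtype _))
    _ ≤ exp (-c / 2) * (1 + √(2 * π / c)) ^ d := by
        gcongr
        rw [show 2 * π / c = π / (c / 2) by ring]
        exact tsum_exp_neg_mul_int_sq_le hc2

lemma exp_neg_pi_mul_sq_mul_add_sqrt_two_pow_le {a : ℝ} (ha : 0 ≤ a) (d : ℕ) :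
    exp (-(π * a ^ 2) / 2) * (a + √2) ^ d ≤ d.factorial * exp 2 := by
  have hpow : (a + √2) ^ d ≤ d.factorial * exp (a + √2) := by
    have := pow_div_factorial_le_exp (a + √2) (by positivity) d
    rwa [div_le_iff₀ (by positivity), mul_comm] at this
  have hexponent : -(π * a ^ 2) / 2 + (a + √2) ≤ 2 := by
    nlinarith [pi_gt_three, sqrt_two_lt_three_halves, sq_nonneg (a - 1 / 3)]
  calc exp (-(π * a ^ 2) / 2) * (a + √2) ^ d
      ≤ exp (-(π * a ^ 2) / 2) * (d.factorial * exp (a + √2)) := by gcongr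
    _ = d.factorial * exp (-(π * a ^ 2) / 2 + (a + √2)) := by
        rw [exp_add (-(π * a ^ 2) / 2)]
        ring
    _ ≤ d.factorial * exp 2 := by gcongr

lemma norm_latVec_sq (d : ℕ) (L : ℝ) (k : Fin d → ℤ) :
    ‖latVec d L k‖ ^ 2 = L ^ 2 * ∑ i, (k i : ℝ) ^ 2 := by
  simp [latVec, EuclideanSpace.norm_sq_eq, mul_pow, Finset.mul_sum]

lemma heat_prefactor_mul_eq (d : ℕ) {L t : ℝ} (hL : 0 < L) (ht : 0 < t) :
    (2 * π * t) ^ (-(d : ℝ) / 2) *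
        (exp (-(L ^ 2 / (2 * t)) / 2) * (1 + √(2 * π / (L ^ 2 / (2 * t)))) ^ d) =
      exp (-(π * (L / √(2 * π * t)) ^ 2) / 2) * (L / √(2 * π * t) + √2) ^ d / L ^ d := by
  set u := √(2 * π * t)
  have hu0 : 0 < u := by positivity
  have hu2 : u ^ 2 = 2 * π * t := sq_sqrt (by positivity)
  have hprefactor : (2 * π * t) ^ (-(d : ℝ) / 2) = (u ^ d)⁻¹ := by
    rw [← hu2, ← rpow_natCast u 2, ← rpow_mul hu0.le, ← rpow_natCast u d,
      ← rpow_neg hu0.le]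
    congr 1
    push_cast
    ring
  have hexp : L ^ 2 / (2 * t) = π * (L / u) ^ 2 := by
    rw [div_pow, hu2]
    field_simp
  have hsqrt : √(2 * π / (L ^ 2 / (2 * t))) = √2 * u / L := by
    rw [← sqrt_sq (by positivity : 0 ≤ √2 * u / L), div_pow, mul_pow, sq_sqrt zero_le_two,
      hu2]
    congr 1
    field_simp
  have hbase : 1 + √2 * u / L = (L / u + √2) * (u / L) := by field_simp
  rw [hprefactor, hsqrt, hexp, hbase, mul_pow, div_pow u L]
  field_simp

theorem etaKer_le_general (d : ℕ) :
    ∃ C : ℝ, 0 < C ∧ ∀ L : ℝ, 1 ≤ L → ∀ t : ℝ, 0 < t →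
      0 ≤ etaKer d L t ∧ etaKer d L t ≤ C / L ^ d := by
  refine ⟨d.factorial * exp 2, by positivity, fun L hL t ht => ⟨?_, ?_⟩⟩
  · exact tsum_nonneg fun n => by positivity
  · have hL0 : 0 < L := one_pos.trans_le hL
    set c := L ^ 2 / (2 * t) with hc
    set a := L / √(2 * π * t)
    refine tsum_le_of_sum_le' (by positivity) fun s => ?_
    calc ∑ n ∈ s, (2 * π * t) ^ (-(d : ℝ) / 2) * exp (-‖latVec d L n‖ ^ 2 / (2 * t))
        = (2 * π * t) ^ (-(d : ℝ) / 2) *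
            ∑ n ∈ s, exp (-c * ∑ i, ((n : Fin d → ℤ) i : ℝ) ^ 2) := by
          rw [Finset.mul_sum]
          refine Finset.sum_congr rfl fun n _ => ?_
          rw [norm_latVec_sq, hc]
          ring_nf
      _ ≤ (2 * π * t) ^ (-(d : ℝ) / 2) * (exp (-c / 2) * (1 + √(2 * π / c)) ^ d) := by
          gcongr
          exact sum_exp_neg_mul_sum_sq_le (by positivity) s
      _ = exp (-(π * a ^ 2) / 2) * (a + √2) ^ d / L ^ d := heat_prefactor_mul_eq d hL0 ht
      _ ≤ d.factorial * exp 2 / L ^ d := by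
          gcongr ?_ / _
          exact exp_neg_pi_mul_sq_mul_add_sqrt_two_pow_le (by positivity) d

/-- There is a constant `C_d` depending only on `d` such that `0 ≤ η^t ≤ C_d / L^d`,
uniformly in `t > 0` and `L ≥ 1`. -/
theorem etaKer_le (d : ℕ) (hd : 1 ≤ d) :
    ∃ C : ℝ, 0 < C ∧ ∀ L : ℝ, 1 ≤ L → ∀ t : ℝ, 0 < t →
      0 ≤ etaKer d L t ∧ etaKer d L t ≤ C / L ^ d :=
  etaKer_le_general d
end

section
/- Prüfer's theorem: For n ≥ 2 and positive integers δ₁,…,δₙ with ∑_{i=1}^n δ_i = 2(n−1), the number of labeled trees on {1,…,n} in which vertex i has degree δ_i equals (n−2)! / ∏_{i=1}^n (δ_i − 1)!. -/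
/-!
Induction on `n` by removing a leaf. Write `δ = d + 1` and let `N(d)` be the number of trees
with degrees `δ`. Since `∑ dᵢ = n - 2 < n`, some vertex `i₀` is a leaf. Deleting it is a
bijection from these trees onto the pairs `(k, T)` of one of the other `n - 1` vertices `k` (the
neighbour of `i₀`) and a tree `T` on them in which `k` has degree `δ k - 1` and every other
vertex keeps its degree; attaching `i₀` to `k` inverts it. Hence `N(d) = ∑ₖ N(d' - eₖ)` with `d'`
the restriction of `d`, where the terms with `d'ₖ = 0` vanish because a tree on at least two
vertices has no isolated vertex. This is the recursion satisfied by `(n - 2)! / ∏ dᵢ!`. The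
base case `n = 2` is the same recursion applied to the one-vertex tree.
-/

open SimpleGraph Finset
open scoped Nat

namespace SimpleGraph

lemma IsAcyclic.map {V W : Type*} {G : SimpleGraph V} (f : V ↪ W) (h : G.IsAcyclic) :
    (G.map f).IsAcyclic := by
  intro w c hc
  have hrange : ∀ x ∈ c.support, x ∈ Set.range f := by
    intro x hx
    obtain ⟨y, -, -, a, -, -, rfl, -⟩ := adj_of_mem_walk_support c hc.not_nil hx
    exact ⟨a, rfl⟩
  have hind : (G.map f).induce (Set.range f) |>.IsAcyclic :=
    (Embedding.map f G).isoInduceRange.isAcyclic_iff.mp h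
  refine hind (c.induce _ hrange) ?_
  rwa [← Walk.isCycle_map_iff_of_injective (f := (Embedding.induce (Set.range f)).toHom)
    (Embedding.induce (G := G.map f) _).injective, Walk.map_induce]

variable {n : ℕ} {i₀ : Fin (n + 1)}

lemma ext_of_comap_succAbove_of_neighborSet {G G' : SimpleGraph (Fin (n + 1))}
    (hcomap : G.comap i₀.succAbove = G'.comap i₀.succAbove)
    (hnbr : G.neighborSet i₀ = G'.neighborSet i₀) : G = G' := by
  have hadj : ∀ v, G.Adj i₀ v ↔ G'.Adj i₀ v := fun v => Set.ext_iff.mp hnbr v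
  ext u v
  obtain rfl | ⟨a, rfl⟩ := Fin.eq_self_or_eq_succAbove i₀ u
  · exact hadj v
  obtain rfl | ⟨b, rfl⟩ := Fin.eq_self_or_eq_succAbove i₀ v
  · rw [adj_comm, hadj, adj_comm]
  · exact (congrArg (fun H : SimpleGraph (Fin n) => H.Adj a b) hcomap).to_iff

lemma ncard_neighborSet_succAbove {G : SimpleGraph (Fin (n + 1))} {k : Fin n}
    (h : G.neighborSet i₀ = {i₀.succAbove k}) (m : Fin n) :
    (G.neighborSet (i₀.succAbove m)).ncard
      = ((G.comap i₀.succAbove).neighborSet m).ncard + (Pi.single k 1 : Fin n → ℕ) m := by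
  set S := G.neighborSet (i₀.succAbove m)
  have hS : i₀.succAbove '' ((G.comap i₀.succAbove).neighborSet m) = S \ {i₀} := by
    rw [show (G.comap i₀.succAbove).neighborSet m = i₀.succAbove ⁻¹' S from rfl,
      Set.image_preimage_eq_inter_range, Fin.range_succAbove, Set.sdiff_eq]
  have hmem : i₀ ∈ S ↔ m = k := by
    rw [mem_neighborSet, adj_comm, ← mem_neighborSet, h, Set.mem_singleton_iff,
      Fin.succAbove_right_inj]
  rw [← Set.ncard_image_of_injective _ (Fin.succAbove_right_injective (p := i₀)), hS]
  by_cases hmk : m = k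
  · rw [hmk, Pi.single_eq_same, Set.ncard_sdiff_singleton_add_one (hmem.mpr hmk)]
  · rw [Pi.single_eq_of_ne hmk, add_zero, Set.sdiff_singleton_eq_self (hmem.not.mpr hmk)]

def addLeaf (i₀ : Fin (n + 1)) (k : Fin n) (H : SimpleGraph (Fin n)) : SimpleGraph (Fin (n + 1)) :=
  H.map i₀.succAboveEmb ⊔ edge i₀ (i₀.succAbove k)

variable {k : Fin n} {H : SimpleGraph (Fin n)}

@[simp]
lemma comap_succAbove_addLeaf : (addLeaf i₀ k H).comap i₀.succAbove = H := by
  ext a b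
  simpa [addLeaf, edge_adj, map_adj', Fin.succAbove_ne] using Adj.ne

@[simp]
lemma neighborSet_addLeaf_self : (addLeaf i₀ k H).neighborSet i₀ = {i₀.succAbove k} := by
  ext v
  simp only [addLeaf, mem_neighborSet, sup_adj, edge_adj, map_adj', Fin.coe_succAboveEmb,
    Set.mem_singleton_iff]
  grind [Fin.succAbove_ne]

lemma isTree_addLeaf (hH : H.IsTree) : (addLeaf i₀ k H).IsTree := by
  refine ⟨⟨fun u v => ?_⟩, ?_⟩
  · have hreach : ∀ v, (addLeaf i₀ k H).Reachable v (i₀.succAbove k) := by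
      intro v
      obtain rfl | ⟨a, rfl⟩ := Fin.eq_self_or_eq_succAbove i₀ v
      · exact Adj.reachable (by simp [← mem_neighborSet])
      · have hHa : ((addLeaf i₀ k H).comap i₀.succAbove).Reachable a k := by
          rw [comap_succAbove_addLeaf]
          exact hH.connected a k
        exact hHa.map (Embedding.comap i₀.succAboveEmb _).toHom
    exact (hreach u).trans (hreach v).symm
  · refine isAcyclic_sup_fromEdgeSet_iff.mpr ⟨hH.isAcyclic.map i₀.succAboveEmb, fun hr => ?_⟩
    obtain ⟨x, hx⟩ := hr.nonempty_neighborSet_left (Fin.ne_succAbove i₀ k)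
    obtain ⟨-, a, -, -, ha, -⟩ := hx
    exact absurd ha (Fin.succAbove_ne i₀ a)

lemma isTree_comap_succAbove [NeZero n] {G : SimpleGraph (Fin (n + 1))} (hG : G.IsTree)
    (hleaf : (G.neighborSet i₀).Subsingleton) : (G.comap i₀.succAbove).IsTree := by
  refine ⟨?_, hG.isAcyclic.of_comap i₀.succAboveEmb⟩
  have hpre : (G.induce (Set.range i₀.succAbove)).Preconnected := by
    refine hG.connected.preconnected.induce_of_degree_eq_one fun v hv => ?_
    rw [Fin.range_succAbove, Set.notMem_compl_iff, Set.mem_singleton_iff] at hv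
    rwa [hv]
  have hiso := (Embedding.comap i₀.succAboveEmb G).isoInduceRange
  exact (connected_iff _).mpr ⟨hiso.preconnected_iff.mpr hpre, inferInstance⟩

lemma addLeaf_comap_succAbove {G : SimpleGraph (Fin (n + 1))}
    (h : G.neighborSet i₀ = {i₀.succAbove k}) : addLeaf i₀ k (G.comap i₀.succAbove) = G :=
  ext_of_comap_succAbove_of_neighborSet comap_succAbove_addLeaf
    (by rw [neighborSet_addLeaf_self, h])

end SimpleGraph

open SimpleGraph

def treesWithDegrees {n : ℕ} (δ : Fin n → ℕ) : Set (SimpleGraph (Fin n)) :=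
  {G | G.IsTree ∧ ∀ i, (G.neighborSet i).ncard = δ i}

lemma treesWithDegrees_eq_empty {n : ℕ} [Nontrivial (Fin n)] {δ : Fin n → ℕ} {i : Fin n}
    (hi : δ i = 0) : treesWithDegrees δ = ∅ :=
  Set.eq_empty_iff_forall_notMem.mpr fun G hG => hG.1.connected.preconnected.not_isIsolated i
    (by rw [← neighborSet_eq_empty, ← Set.ncard_eq_zero, hG.2 i, hi])

section LeafRemoval

variable {n : ℕ} {i₀ : Fin (n + 1)} {δ : Fin (n + 1) → ℕ}

lemma addLeaf_mem_treesWithDegrees (hδ : ∀ i, δ i ≠ 0) (hleaf : δ i₀ = 1) {k : Fin n}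
    {H : SimpleGraph (Fin n)} (hH : H ∈ treesWithDegrees (δ ∘ i₀.succAbove - Pi.single k 1)) :
    addLeaf i₀ k H ∈ treesWithDegrees δ := by
  refine ⟨isTree_addLeaf hH.1, fun i => ?_⟩
  obtain rfl | ⟨m, rfl⟩ := Fin.eq_self_or_eq_succAbove i₀ i
  · rw [neighborSet_addLeaf_self, Set.ncard_singleton, hleaf]
  · rw [ncard_neighborSet_succAbove neighborSet_addLeaf_self, comap_succAbove_addLeaf, hH.2 m]
    have := hδ (i₀.succAbove m)
    simp only [Pi.sub_apply, Function.comp_apply, Pi.single_apply]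
    split_ifs <;> omega

lemma exists_addLeaf_eq [NeZero n] (hleaf : δ i₀ = 1) {G : SimpleGraph (Fin (n + 1))}
    (hG : G ∈ treesWithDegrees δ) :
    ∃ k, ∃ H ∈ treesWithDegrees (δ ∘ i₀.succAbove - Pi.single k 1), addLeaf i₀ k H = G := by
  obtain ⟨j, hj⟩ := Set.ncard_eq_one.mp ((hG.2 i₀).trans hleaf)
  have hj₀ : j ≠ i₀ := (show G.Adj i₀ j by simp [← mem_neighborSet, hj]).ne'
  obtain ⟨k, rfl⟩ := Fin.exists_succAbove_eq hj₀
  refine ⟨k, G.comap i₀.succAbove,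
    ⟨isTree_comap_succAbove hG.1 (hj ▸ Set.subsingleton_singleton), fun m => ?_⟩,
    addLeaf_comap_succAbove hj⟩
  have hm := ncard_neighborSet_succAbove hj m
  rw [hG.2] at hm
  simp only [Pi.sub_apply, Function.comp_apply]
  omega

lemma card_treesWithDegrees_eq_sum [NeZero n] (hδ : ∀ i, δ i ≠ 0) (hleaf : δ i₀ = 1) :
    Nat.card (treesWithDegrees δ)
      = ∑ k, Nat.card (treesWithDegrees (δ ∘ i₀.succAbove - Pi.single k 1)) := by
  rw [← Nat.card_sigma]
  refine (Nat.card_eq_of_bijective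
    (fun H => ⟨addLeaf i₀ H.1 H.2, addLeaf_mem_treesWithDegrees hδ hleaf H.2.2⟩) ⟨?_, ?_⟩).symm
  · rintro ⟨k, H, _⟩ ⟨k', H', _⟩ h
    have hG : addLeaf i₀ k H = addLeaf i₀ k' H' := congrArg Subtype.val h
    have hk : k = k' := by
      simpa using congrArg (fun G => G.neighborSet i₀) hG
    subst hk
    have hH : H = H' := by
      simpa using congrArg (fun G => G.comap i₀.succAbove) hG
    subst hH
    rfl
  · rintro ⟨G, hG⟩
    obtain ⟨k, H, hH, rfl⟩ := exists_addLeaf_eq hleaf hG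
    exact ⟨⟨k, H, hH⟩, rfl⟩

end LeafRemoval

lemma prod_factorial_eq_mul_prod_factorial_sub_single {ι : Type*} [Fintype ι] [DecidableEq ι]
    (f : ι → ℕ) {k : ι} (hk : f k ≠ 0) :
    ∏ i, (f i)! = f k * ∏ i, ((f - Pi.single k 1 : ι → ℕ) i)! := by
  rw [Fintype.prod_eq_mul_prod_compl k, Fintype.prod_eq_mul_prod_compl k, ← mul_assoc]
  congr 1
  · simp [Nat.mul_factorial_pred hk]
  · refine Finset.prod_congr rfl fun i hi => ?_
    rw [Finset.mem_compl, Finset.mem_singleton] at hi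
    simp [Pi.single_eq_of_ne hi]

section Counting

variable {n : ℕ}

lemma card_treesWithDegrees_sub_single_mul_prod_factorial (hn : 2 ≤ n)
    (ih : ∀ d : Fin n → ℕ, ∑ i, d i = n - 2 →
      Nat.card (treesWithDegrees (d + 1)) * ∏ i, (d i)! = (n - 2)!)
    (d : Fin n → ℕ) (hd : ∑ i, d i = n - 1) (k : Fin n) :
    Nat.card (treesWithDegrees (d + 1 - Pi.single k 1)) * ∏ i, (d i)! = d k * (n - 2)! := by
  by_cases hk : d k = 0
  · have : Nontrivial (Fin n) := Fin.nontrivial_iff_two_le.mpr hn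
    rw [treesWithDegrees_eq_empty (i := k) (by simp [hk]), hk]
    simp
  have hsingle : ∀ i, (Pi.single k 1 : Fin n → ℕ) i ≤ d i := by
    intro i
    rw [Pi.single_apply]
    split_ifs with hi
    · rw [hi]
      omega
    · exact Nat.zero_le _
  have hdeg : d + 1 - Pi.single k 1 = (d - Pi.single k 1) + 1 := by
    ext i
    have := hsingle i
    simp only [Pi.add_apply, Pi.sub_apply, Pi.one_apply]
    omega
  have hsum : ∑ i, (d - Pi.single k 1 : Fin n → ℕ) i = n - 2 := by
    rw [Finset.sum_congr rfl fun i _ => Pi.sub_apply d _ i,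
      Finset.sum_tsub_distrib _ fun i _ => hsingle i, hd]
    simp
    omega
  rw [hdeg, prod_factorial_eq_mul_prod_factorial_sub_single d hk, mul_left_comm, ih _ hsum]

lemma card_treesWithDegrees_succ_mul_prod_factorial (hn : 2 ≤ n)
    (ih : ∀ d : Fin n → ℕ, ∑ i, d i = n - 2 →
      Nat.card (treesWithDegrees (d + 1)) * ∏ i, (d i)! = (n - 2)!)
    (d : Fin (n + 1) → ℕ) (hd : ∑ i, d i = n + 1 - 2) :
    Nat.card (treesWithDegrees (d + 1)) * ∏ i, (d i)! = (n + 1 - 2)! := by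
  have : NeZero n := ⟨by omega⟩
  obtain ⟨i₀, -, hi₀⟩ : ∃ i ∈ univ, d i < 1 := exists_lt_of_sum_lt (by simp; omega)
  have hleaf : d i₀ = 0 := by omega
  have hsum : ∑ m, d (i₀.succAbove m) = n - 1 := by
    rw [Fin.sum_univ_succAbove d i₀, hleaf] at hd
    omega
  have hprod : ∏ i, (d i)! = ∏ m, (d (i₀.succAbove m))! := by
    rw [Fin.prod_univ_succAbove _ i₀, hleaf, Nat.factorial_zero, one_mul]
  rw [card_treesWithDegrees_eq_sum (i₀ := i₀) (by simp) (by simp [hleaf]), hprod, Finset.sum_mul]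
  calc ∑ k, Nat.card (treesWithDegrees (d ∘ i₀.succAbove + 1 - Pi.single k 1))
          * ∏ m, (d (i₀.succAbove m))!
      _ = ∑ k, d (i₀.succAbove k) * (n - 2)! :=
        Finset.sum_congr rfl fun k _ =>
          card_treesWithDegrees_sub_single_mul_prod_factorial hn ih (d ∘ i₀.succAbove) hsum k
      _ = (n + 1 - 2)! := by
        rw [← Finset.sum_mul, hsum, show n + 1 - 2 = n - 1 by omega,
          show n - 2 = n - 1 - 1 by omega, Nat.mul_factorial_pred (by omega)]

lemma card_treesWithDegrees_fin_one : Nat.card (treesWithDegrees (0 : Fin 1 → ℕ)) = 1 := by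
  have huniv : treesWithDegrees (0 : Fin 1 → ℕ) = Set.univ :=
    Set.eq_univ_of_forall fun G => ⟨.of_subsingleton, fun i => by
      rw [Pi.zero_apply, Set.ncard_eq_zero, neighborSet_eq_empty]
      exact fun j hij => hij.ne (Subsingleton.elim i j)⟩
  rw [huniv, Nat.card_univ, Nat.card_unique]

lemma card_treesWithDegrees_fin_two : Nat.card (treesWithDegrees (1 : Fin 2 → ℕ)) = 1 := by
  rw [card_treesWithDegrees_eq_sum (i₀ := 0) (by simp) rfl, Fin.sum_univ_one]
  convert card_treesWithDegrees_fin_one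
  ext m
  simp [Subsingleton.elim m 0]

theorem card_treesWithDegrees_mul_prod_factorial (hn : 2 ≤ n) (d : Fin n → ℕ)
    (hd : ∑ i, d i = n - 2) :
    Nat.card (treesWithDegrees (d + 1)) * ∏ i, (d i)! = (n - 2)! := by
  induction n, hn using Nat.le_induction with
  | base =>
    obtain rfl : d = 0 := funext fun i => by simpa using Finset.sum_eq_zero_iff.mp hd i
    simpa using card_treesWithDegrees_fin_two
  | succ n hn ih => exact card_treesWithDegrees_succ_mul_prod_factorial hn ih d hd

end Counting

/-- Prüfer's theorem: for `n ≥ 2` and positive integers `δ₁,…,δₙ` with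
`∑ δᵢ = 2(n−1)`, the number of labeled trees on `{1,…,n}` in which vertex `i`
has degree `δᵢ` equals `(n−2)! / ∏ (δᵢ − 1)!` (stated multiplicatively). -/
theorem prufer_count_trees (n : ℕ) (hn : 2 ≤ n) (δ : Fin n → ℕ)
    (hδ : ∀ i, 1 ≤ δ i) (hsum : ∑ i, δ i = 2 * (n - 1)) :
    Nat.card {G : SimpleGraph (Fin n) // G.IsTree ∧ ∀ i, (G.neighborSet i).ncard = δ i}
        * ∏ i, (δ i - 1).factorial
      = (n - 2).factorial := by
  have hδ' : δ = (δ - 1) + 1 := funext fun i => (Nat.sub_add_cancel (hδ i)).symm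
  have hd : ∑ i, (δ i - 1) = n - 2 := by
    rw [Finset.sum_tsub_distrib univ fun i _ => hδ i]
    simp only [sum_const, card_univ, Fintype.card_fin, smul_eq_mul, mul_one]
    omega
  rw [← card_treesWithDegrees_mul_prod_factorial hn (δ - 1) hd, ← hδ']
  rfl
end

section
/- Tree bound for Ursell functions: Let ξ : Ω × Ω → ℝ be symmetric with −1 ≤ ξ(ω,ω̃) ≤ 0 for all ω, ω̃ (e.g. ξ = e^{−V} − 1 with V ≥ 0 symmetric). Define the Ursell function φ(ω₁,…,ωₙ) = (1/n!) ∑_{G} ∏_{{i,j}∈G} ξ(ω_i,ω_j), where the sum is over all connected graphs G on {1,…,n}. Then |φ(ω₁,…,ωₙ)| ≤ (1/n!) ∑_{T} ∏_{{i,j}∈T} |ξ(ω_i,ω_j)|, where the sum is over all trees T on {1,…,n}. -/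
/-!
Penrose's partition scheme. Fix a root `r`. A connected graph `G` determines a spanning tree
`τ(G)` by joining every vertex `v ≠ r` to its least neighbour one step closer to `r`. The connected
graphs with a given tree `T` form an interval `[T, R(T)]`: `R(T)` adds every edge between vertices
of equal depth and every edge from `v` to a vertex of the previous depth that exceeds the parent of
`v`. Summing `∏ ξ` over such an interval gives `∏_{T} ξ · ∏_{R(T) \ T} (1 + ξ)`, of absolute value
at most `∏_{T} |ξ|` since `|1 + ξ| ≤ 1`; summing over the trees `T` gives the bound.
-/

open scoped Classical

open Finset

lemma Finset.sum_Icc_prod {ι R : Type*} [DecidableEq ι] [CommSemiring R] {s t : Finset ι}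
    (hst : s ⊆ t) (f : ι → R) :
    ∑ u ∈ Icc s t, ∏ i ∈ u, f i = (∏ i ∈ s, f i) * ∏ i ∈ t \ s, (1 + f i) := by
  have hdisj {u : Finset ι} (hu : u ∈ (t \ s).powerset) : Disjoint s u :=
    disjoint_sdiff.mono_right (mem_powerset.mp hu)
  rw [Icc_eq_image_powerset hst, sum_image, prod_one_add, mul_sum]
  · exact sum_congr rfl fun u hu => prod_union (hdisj hu)
  · intro u hu w hw huw
    rw [mem_coe] at hu hw
    simpa [union_sdiff_cancel_left (hdisj hu), union_sdiff_cancel_left (hdisj hw)]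
      using congrArg (· \ s) huw

lemma Finset.abs_sum_Icc_prod_le {ι : Type*} [DecidableEq ι] {s t : Finset ι} (hst : s ⊆ t)
    {f : ι → ℝ} (hf : ∀ i ∈ t \ s, |1 + f i| ≤ 1) :
    |∑ u ∈ Icc s t, ∏ i ∈ u, f i| ≤ ∏ i ∈ s, |f i| := by
  rw [sum_Icc_prod hst, abs_mul, abs_prod, abs_prod]
  exact mul_le_of_le_one_right (prod_nonneg fun _ _ => abs_nonneg _)
    (prod_le_one (fun _ _ => abs_nonneg _) hf)

namespace SimpleGraph

variable {V : Type*}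

section Distance

variable {G : SimpleGraph V}

lemma Connected.exists_adj_dist_add_one_eq (hG : G.Connected) {r v : V} (hv : v ≠ r) :
    ∃ u, G.Adj u v ∧ G.dist r u + 1 = G.dist r v := by
  obtain ⟨p, hp⟩ := hG.exists_walk_length_eq_dist v r
  have hnil : ¬ p.Nil := Walk.not_nil_of_ne hv
  refine ⟨p.snd, (p.adj_snd hnil).symm, ?_⟩
  have hshort : G.dist r p.snd ≤ G.dist r v - 1 := by
    rw [dist_comm, dist_comm (u := r), ← hp, ← p.length_tail_add_one hnil, Nat.add_sub_cancel]
    exact dist_le _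
  have := (p.adj_snd hnil).diff_dist_adj (u := r)
  have := hG.pos_dist_of_ne hv.symm
  omega

lemma le_add_dist_of_forall_adj {f : V → ℕ} (hf : ∀ a b, G.Adj a b → f b ≤ f a + 1)
    {u v : V} (huv : G.Reachable u v) : f v ≤ f u + G.dist u v := by
  obtain ⟨p, hp⟩ := huv.exists_walk_length_eq_dist
  rw [← hp]
  clear hp huv
  induction p with
  | nil => simp
  | cons h _ ih =>
    have := hf _ _ h
    simp only [Walk.length_cons]
    omega

end Distance

variable [Fintype V]

lemma edgeFinset_fromEdgeSet_of_subset {A : SimpleGraph V} {s : Finset (Sym2 V)}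
    [Fintype (fromEdgeSet (s : Set (Sym2 V))).edgeSet] (hs : s ⊆ A.edgeFinset) :
    (fromEdgeSet (s : Set (Sym2 V))).edgeFinset = s := by
  ext e
  simp only [mem_edgeFinset, edgeSet_fromEdgeSet, Set.mem_sdiff, mem_coe, Sym2.mem_diagSet]
  exact and_iff_left_of_imp fun he => A.not_isDiag_of_mem_edgeSet (mem_edgeFinset.mp (hs he))

lemma sum_edgeFinset_Icc [DecidableEq V] {R : Type*} [AddCommMonoid R]
    {T A : SimpleGraph V} (F : Finset (Sym2 V) → R) :
    ∑ G : SimpleGraph V with T ≤ G ∧ G ≤ A, F G.edgeFinset =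
      ∑ s ∈ Icc T.edgeFinset A.edgeFinset, F s := by
  refine sum_bij' (fun G _ => G.edgeFinset) (fun s _ => fromEdgeSet s) ?_ ?_ ?_ ?_
    fun _ _ => rfl
  · intro G hG
    simpa [edgeFinset_subset_edgeFinset] using hG
  · intro s hs
    rw [mem_Icc] at hs
    rw [mem_filter, ← edgeFinset_subset_edgeFinset, ← edgeFinset_subset_edgeFinset,
      edgeFinset_fromEdgeSet_of_subset hs.2]
    exact ⟨mem_univ _, hs⟩
  · intro G _
    simp [fromEdgeSet_edgeSet]
  · intro s hs
    convert edgeFinset_fromEdgeSet_of_subset (mem_Icc.mp hs).2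

section Penrose

noncomputable def parentCandidates (G : SimpleGraph V) (r v : V) : Finset V :=
  {u | G.Adj u v ∧ G.dist r u + 1 = G.dist r v}

@[simp]
lemma mem_parentCandidates {G : SimpleGraph V} {r u v : V} :
    u ∈ G.parentCandidates r v ↔ G.Adj u v ∧ G.dist r u + 1 = G.dist r v := by
  simp [parentCandidates]

variable [LinearOrder V]

/-- A vertex with no neighbour closer to `r` (the root, or any vertex cut off from `r`) is its own
parent, and so contributes no edge to `penroseTree`. -/
noncomputable def penroseParent (G : SimpleGraph V) (r v : V) : V :=
  if h : (G.parentCandidates r v).Nonempty then (G.parentCandidates r v).min' h else v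

noncomputable def penroseTree (G : SimpleGraph V) (r : V) : SimpleGraph V :=
  fromEdgeSet (Set.range fun v => s(G.penroseParent r v, v))

variable {G : SimpleGraph V} {r u v : V}

lemma penroseParent_le (hu : u ∈ G.parentCandidates r v) : G.penroseParent r v ≤ u := by
  rw [penroseParent, dif_pos ⟨u, hu⟩]
  exact min'_le _ _ hu

lemma penroseParent_eq (hu : u ∈ G.parentCandidates r v)
    (hmin : ∀ w ∈ G.parentCandidates r v, u ≤ w) : G.penroseParent r v = u := by
  refine (penroseParent_le hu).antisymm (hmin _ ?_)
  rw [penroseParent, dif_pos ⟨u, hu⟩]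
  exact min'_mem _ _

lemma penroseParent_mem_of_ne (h : G.penroseParent r v ≠ v) :
    G.penroseParent r v ∈ G.parentCandidates r v := by
  unfold penroseParent at h ⊢
  split_ifs at h ⊢ with hne
  · exact min'_mem _ _
  · exact absurd rfl h

lemma penroseParent_mem (hG : G.Connected) (hv : v ≠ r) :
    G.penroseParent r v ∈ G.parentCandidates r v := by
  obtain ⟨u, hu⟩ := hG.exists_adj_dist_add_one_eq hv
  rw [penroseParent, dif_pos ⟨u, mem_parentCandidates.mpr hu⟩]
  exact min'_mem _ _

lemma adj_penroseParent (hG : G.Connected) (hv : v ≠ r) : G.Adj (G.penroseParent r v) v :=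
  (mem_parentCandidates.mp (penroseParent_mem hG hv)).1

lemma dist_penroseParent (hG : G.Connected) (hv : v ≠ r) :
    G.dist r (G.penroseParent r v) + 1 = G.dist r v :=
  (mem_parentCandidates.mp (penroseParent_mem hG hv)).2

@[simp]
lemma penroseParent_root : G.penroseParent r r = r := by
  by_contra h
  simpa using (mem_parentCandidates.mp (penroseParent_mem_of_ne h)).2

lemma penroseTree_adj {a b : V} :
    (G.penroseTree r).Adj a b ↔ a ≠ b ∧ (a = G.penroseParent r b ∨ b = G.penroseParent r a) := by
  simp only [penroseTree, fromEdgeSet_adj, Set.mem_range, Sym2.eq_iff]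
  grind

lemma penroseTree_le : G.penroseTree r ≤ G := by
  intro a b hab
  obtain ⟨hne, rfl | rfl⟩ := penroseTree_adj.mp hab
  · exact (mem_parentCandidates.mp (penroseParent_mem_of_ne hne)).1
  · exact (mem_parentCandidates.mp (penroseParent_mem_of_ne hne.symm)).1.symm

lemma exists_walk_penroseTree (hG : G.Connected) (v : V) :
    ∃ p : (G.penroseTree r).Walk r v, p.length = G.dist r v := by
  induction hd : G.dist r v using Nat.strong_induction_on generalizing v with
  | _ k ih =>
    by_cases hv : v = r
    · subst hv
      exact ⟨.nil, by simp [← hd]⟩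
    have hpar := dist_penroseParent hG hv
    obtain ⟨p, hp⟩ := ih _ (by omega) (G.penroseParent r v) rfl
    have hadj : (G.penroseTree r).Adj (G.penroseParent r v) v :=
      penroseTree_adj.mpr ⟨(adj_penroseParent hG hv).ne, .inl rfl⟩
    exact ⟨p.concat hadj, by simp [hp]; omega⟩

lemma penroseTree_connected (hG : G.Connected) : (G.penroseTree r).Connected := by
  have hreach (v : V) : (G.penroseTree r).Reachable r v :=
    (exists_walk_penroseTree hG v).elim fun p _ => ⟨p⟩
  exact (connected_iff _).mpr ⟨fun u v => (hreach u).symm.trans (hreach v), ⟨r⟩⟩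

lemma dist_penroseTree (hG : G.Connected) (v : V) : (G.penroseTree r).dist r v = G.dist r v := by
  obtain ⟨p, hp⟩ := exists_walk_penroseTree hG v
  exact le_antisymm (hp ▸ dist_le p) (Reachable.dist_anti penroseTree_le ⟨p⟩)

lemma penroseParent_penroseTree (hG : G.Connected) :
    (G.penroseTree r).penroseParent r = G.penroseParent r := by
  funext v
  by_cases hv : v = r
  · simp [hv]
  apply penroseParent_eq
  · rw [mem_parentCandidates, dist_penroseTree hG, dist_penroseTree hG]
    exact ⟨penroseTree_adj.mpr ⟨(adj_penroseParent hG hv).ne, .inl rfl⟩,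
      dist_penroseParent hG hv⟩
  · intro w hw
    rw [mem_parentCandidates, dist_penroseTree hG, dist_penroseTree hG] at hw
    exact penroseParent_le (mem_parentCandidates.mpr ⟨penroseTree_le hw.1, hw.2⟩)

lemma penroseTree_penroseTree (hG : G.Connected) :
    (G.penroseTree r).penroseTree r = G.penroseTree r := by
  rw [penroseTree, penroseParent_penroseTree hG, ← penroseTree]

lemma edgeFinset_penroseTree_subset :
    (G.penroseTree r).edgeFinset ⊆ (univ.erase r).image fun v => s(G.penroseParent r v, v) := by
  intro e he
  induction e using Sym2.ind with | _ a b
  rw [mem_edgeFinset, mem_edgeSet, penroseTree_adj] at he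
  obtain ⟨hne, rfl | rfl⟩ := he
  · exact mem_image.mpr ⟨b, mem_erase.mpr ⟨fun hb => hne (by simp [hb]), mem_univ _⟩, rfl⟩
  · exact mem_image.mpr ⟨a, mem_erase.mpr ⟨fun ha => hne (by simp [ha]), mem_univ _⟩,
      Sym2.eq_swap⟩

/-- Every vertex but the root contributes at most one edge, and a connected graph with at most
`|V| - 1` edges is a tree. -/
lemma penroseTree_isTree (hG : G.Connected) : (G.penroseTree r).IsTree := by
  have hconn := penroseTree_connected (r := r) hG
  refine isTree_iff_connected_and_card.mpr ⟨hconn,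
    le_antisymm ?_ hconn.card_vert_le_card_edgeSet_add_one⟩
  have hcard := card_le_card (edgeFinset_penroseTree_subset (G := G) (r := r))
  have hpos := Fintype.card_pos_iff.mpr ⟨r⟩
  rw [edgeFinset_card] at hcard
  rw [Nat.card_eq_fintype_card, Nat.card_eq_fintype_card]
  grind [card_image_le, card_erase_of_mem, card_univ]

/-- The graph `R(T)` of Penrose's partition scheme: when `T` is its own Penrose tree, the connected
graphs with Penrose tree `T` are exactly the graphs between `T` and `T.penroseHull r`. -/
noncomputable def penroseHull (T : SimpleGraph V) (r : V) : SimpleGraph V :=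
  fromRel fun a b => T.dist r a = T.dist r b ∨
    T.dist r b = T.dist r a + 1 ∧ T.penroseParent r b ≤ a

variable {T : SimpleGraph V}

lemma le_penroseHull_penroseTree (hG : G.Connected) : G ≤ (G.penroseTree r).penroseHull r := by
  intro a b hab
  simp only [penroseHull, fromRel_adj, dist_penroseTree hG, penroseParent_penroseTree hG]
  refine ⟨hab.ne, ?_⟩
  have hstep := hab.diff_dist_adj (u := r)
  have hstep' := hab.symm.diff_dist_adj (u := r)
  rcases lt_trichotomy (G.dist r a) (G.dist r b) with h | h | h
  · have h : G.dist r b = G.dist r a + 1 := by omega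
    exact .inl (.inr ⟨h, penroseParent_le (mem_parentCandidates.mpr ⟨hab, h.symm⟩)⟩)
  · exact .inl (.inl h)
  · have h : G.dist r a = G.dist r b + 1 := by omega
    exact .inr (.inr ⟨h, penroseParent_le (mem_parentCandidates.mpr ⟨hab.symm, h.symm⟩)⟩)

lemma dist_eq_of_le_penroseHull (hT : T.Connected) (hTG : T ≤ G) (hGT : G ≤ T.penroseHull r)
    (v : V) : G.dist r v = T.dist r v := by
  refine le_antisymm (Reachable.dist_anti hTG (hT.preconnected r v)) ?_
  have hlip (a b : V) (hab : G.Adj a b) : T.dist r b ≤ T.dist r a + 1 := by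
    rcases (hGT hab).2 with (h | ⟨h, _⟩) | (h | ⟨h, _⟩) <;> omega
  simpa using le_add_dist_of_forall_adj hlip ((hT.mono hTG).preconnected r v)

lemma penroseParent_eq_of_le_penroseHull (hT : T.Connected) (hTG : T ≤ G)
    (hGT : G ≤ T.penroseHull r) : G.penroseParent r = T.penroseParent r := by
  funext v
  by_cases hv : v = r
  · simp [hv]
  have hdist := dist_eq_of_le_penroseHull hT hTG hGT
  apply penroseParent_eq
  · rw [mem_parentCandidates, hdist, hdist]
    exact ⟨hTG (adj_penroseParent hT hv), dist_penroseParent hT hv⟩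
  · intro w hw
    rw [mem_parentCandidates, hdist, hdist] at hw
    rcases (hGT hw.1).2 with (h | ⟨_, hle⟩) | (h | ⟨h, _⟩)
    · omega
    · exact hle
    · omega
    · omega

theorem connected_and_penroseTree_eq_iff (hT : T.Connected) (hTT : T.penroseTree r = T) :
    G.Connected ∧ G.penroseTree r = T ↔ T ≤ G ∧ G ≤ T.penroseHull r := by
  constructor
  · rintro ⟨hG, rfl⟩
    exact ⟨penroseTree_le, le_penroseHull_penroseTree hG⟩
  · rintro ⟨hTG, hGT⟩
    refine ⟨hT.mono hTG, ?_⟩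
    rw [← hTT, penroseTree, penroseParent_eq_of_le_penroseHull hT hTG hGT, ← penroseTree]

end Penrose

section TreeBound

variable [LinearOrder V]

lemma abs_sum_prod_penroseTree_eq_le (r : V) (T : SimpleGraph V) {f : Sym2 V → ℝ}
    (hf : ∀ e, |1 + f e| ≤ 1) :
    |∑ G : SimpleGraph V with G.Connected ∧ G.penroseTree r = T, ∏ e ∈ G.edgeFinset, f e|
      ≤ ∏ e ∈ T.edgeFinset, |f e| := by
  by_cases hfib : ∃ G₀ : SimpleGraph V, G₀.Connected ∧ G₀.penroseTree r = T
  · obtain ⟨G₀, hG₀, rfl⟩ := hfib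
    have hfiber (G : SimpleGraph V) := connected_and_penroseTree_eq_iff (G := G)
      (penroseTree_connected (r := r) hG₀) (penroseTree_penroseTree hG₀)
    rw [filter_congr fun G _ => hfiber G, sum_edgeFinset_Icc fun s => ∏ e ∈ s, f e]
    exact abs_sum_Icc_prod_le
      (edgeFinset_subset_edgeFinset.mpr (penroseTree_le.trans (le_penroseHull_penroseTree hG₀)))
      fun e _ => hf e
  · rw [filter_false_of_mem fun G _ hG => hfib ⟨G, hG⟩, sum_empty, abs_zero]
    exact prod_nonneg fun _ _ => abs_nonneg _

theorem abs_sum_connected_prod_le_sum_isTree_prod {f : Sym2 V → ℝ} (hf : ∀ e, |1 + f e| ≤ 1) :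
    |∑ G : SimpleGraph V with G.Connected, ∏ e ∈ G.edgeFinset, f e|
      ≤ ∑ T : SimpleGraph V with T.IsTree, ∏ e ∈ T.edgeFinset, |f e| := by
  cases isEmpty_or_nonempty V with
  | inl hV =>
    rw [filter_false_of_mem fun G _ hG => hV.false hG.nonempty.some, sum_empty, abs_zero]
    exact sum_nonneg fun _ _ => prod_nonneg fun _ _ => abs_nonneg _
  | inr hV =>
    obtain ⟨r⟩ := hV
    have hmaps : ∀ G ∈ ({G | G.Connected} : Finset (SimpleGraph V)),
        G.penroseTree r ∈ ({T | T.IsTree} : Finset (SimpleGraph V)) := fun G hG =>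
      mem_filter.mpr ⟨mem_univ _, penroseTree_isTree (mem_filter.mp hG).2⟩
    rw [← sum_fiberwise_of_maps_to hmaps]
    refine (abs_sum_le_sum_abs _ _).trans (sum_le_sum fun T _ => ?_)
    rw [filter_filter]
    exact abs_sum_prod_penroseTree_eq_le r T hf

lemma prod_prod_ite_lt_adj_eq_prod_edgeFinset {M : Type*} [CommMonoid M] (G : SimpleGraph V)
    (g : V → V → M) :
    ∏ i, ∏ j, (if i < j ∧ G.Adj i j then g i j else 1) = ∏ e ∈ G.edgeFinset, g e.inf e.sup := by
  rw [← prod_product', ← prod_filter]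
  refine prod_bij' (fun p _ => s(p.1, p.2)) (fun e _ => (e.inf, e.sup)) ?_ ?_ ?_ ?_ ?_
  · intro p hp
    simpa using (mem_filter.mp hp).2.2
  · intro e he
    induction e using Sym2.ind with | _ a b
    rw [mem_edgeFinset, mem_edgeSet] at he
    rcases he.ne.lt_or_gt with h | h
    · simpa [h.le] using ⟨h, he⟩
    · simpa [h.le] using ⟨h, he.symm⟩
  · intro p hp
    simp [(mem_filter.mp hp).2.1.le]
  · intro e _
    exact Sym2.sortEquiv.symm_apply_apply e
  · intro p hp
    simp [(mem_filter.mp hp).2.1.le]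

end TreeBound

end SimpleGraph

open SimpleGraph in
theorem ursell_tree_bound_general {Ω : Type*} (n : ℕ) (ξ : Ω → Ω → ℝ)
    (hlb : ∀ a b, -1 ≤ ξ a b) (hub : ∀ a b, ξ a b ≤ 0)
    (ω : Fin n → Ω) :
    |(1 / (n.factorial : ℝ)) *
        ∑ G : SimpleGraph (Fin n),
          (if G.Connected then
            ∏ i : Fin n, ∏ j : Fin n,
              (if i < j ∧ G.Adj i j then ξ (ω i) (ω j) else 1)
          else 0)|
      ≤ (1 / (n.factorial : ℝ)) *
        ∑ G : SimpleGraph (Fin n),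
          (if G.IsTree then
            ∏ i : Fin n, ∏ j : Fin n,
              (if i < j ∧ G.Adj i j then |ξ (ω i) (ω j)| else 1)
          else 0) := by
  have hf (e : Sym2 (Fin n)) : |1 + ξ (ω e.inf) (ω e.sup)| ≤ 1 :=
    abs_le.mpr ⟨by linarith [hlb (ω e.inf) (ω e.sup)], by linarith [hub (ω e.inf) (ω e.sup)]⟩
  simp_rw [← sum_filter, prod_prod_ite_lt_adj_eq_prod_edgeFinset]
  rw [abs_mul, abs_of_nonneg (by positivity)]
  exact mul_le_mul_of_nonneg_left (abs_sum_connected_prod_le_sum_isTree_prod hf) (by positivity)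

/-- Tree bound for Ursell functions: let `ξ : Ω × Ω → ℝ` be symmetric with
`−1 ≤ ξ ≤ 0`. Then the Ursell function
`φ(ω₁,…,ωₙ) = (1/n!) ∑_{G connected} ∏_{{i,j}∈G} ξ(ωᵢ,ωⱼ)` satisfies
`|φ(ω₁,…,ωₙ)| ≤ (1/n!) ∑_{T tree} ∏_{{i,j}∈T} |ξ(ωᵢ,ωⱼ)|`. -/
theorem ursell_tree_bound {Ω : Type*} (n : ℕ) (hn : 1 ≤ n) (ξ : Ω → Ω → ℝ)
    (hsymm : ∀ a b, ξ a b = ξ b a)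
    (hlb : ∀ a b, -1 ≤ ξ a b) (hub : ∀ a b, ξ a b ≤ 0)
    (ω : Fin n → Ω) :
    |(1 / (n.factorial : ℝ)) *
        ∑ G : SimpleGraph (Fin n),
          (if G.Connected then
            ∏ i : Fin n, ∏ j : Fin n,
              (if i < j ∧ G.Adj i j then ξ (ω i) (ω j) else 1)
          else 0)|
      ≤ (1 / (n.factorial : ℝ)) *
        ∑ G : SimpleGraph (Fin n),
          (if G.IsTree then
            ∏ i : Fin n, ∏ j : Fin n,
              (if i < j ∧ G.Adj i j then |ξ (ω i) (ω j)| else 1)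
          else 0) :=
  ursell_tree_bound_general n ξ hlb hub ω
end
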